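/- arXiv:cs/0606099 — 6 statements merged into one kernel-verified Lean document; each statement's English description precedes it below -/
import Mathlib

section
/- Let E = {1,...,a} and let D_1,...,D_a be n×n positive semi-definite Hermitian complex matrices. Define the set function g : 2^E → ℝ by g(S) = log det(I + Σ_{i∈S} D_i). Then g is a rank function, i.e.: (i) g(∅) = 0; (ii) g is monotone: g(S) ≤ g(T) whenever S ⊆ T ⊆ E; and (iii) g is submodular: g(S) + g(T) ≥ g(S ∩ T) + g(S ∪ T) for all S, T ⊆ E. Consequently the polyhedron B(g,E) = {x ∈ ℝ^a : x_i ≥ 0 for all i, and Σ_{i∈S} x_i ≤ g(S) for all S ⊆ E} is a polymatroid. -/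
/-!
Every `C ≥ 0` factors as `C = Lᴴ L`, so the matrix determinant lemma gives
`det (N + C) = det N · det (1 + L N⁻¹ Lᴴ)` for `N > 0`. The second factor is at least `1`, which
makes `log det` monotone, and it decreases as `N` grows because inversion is antitone in the
Loewner order. Hence `N ↦ det (N + C) / det N` is antitone, which for `N = I + D(S)` and
`C = D(T \ S)` is the submodularity of `S ↦ log det (I + D(S))`.
-/

open Finset ComplexOrder

/-- The set function `g(S) = log det(I + ∑_{i ∈ S} D_i)` (the determinant of a
positive semidefinite Hermitian matrix is a nonnegative real, so we take the
real part). -/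
noncomputable def gFun (a n : ℕ) (D : Fin a → Matrix (Fin n) (Fin n) ℂ)
    (S : Finset (Fin a)) : ℝ :=
  Real.log ((1 + ∑ i ∈ S, D i).det.re)

open Matrix
open scoped MatrixOrder Matrix.Norms.L2Operator

namespace Matrix

variable {𝕜 ι : Type*} [RCLike 𝕜]

lemma PosDef.of_le {M N : Matrix ι ι 𝕜} (hM : M.PosDef) (h : M ≤ N) : N.PosDef := by
  simpa using hM.add_posSemidef (Matrix.le_iff.mp h)

variable [Fintype ι] [DecidableEq ι]

lemma PosSemidef.one_le_det_one_add {P : Matrix ι ι 𝕜} (hP : P.PosSemidef) :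
    1 ≤ (1 + P).det := by
  have hcfc : 1 + P = cfc (fun x : ℝ => 1 + x) P := by
    rw [cfc_add .., cfc_const_one .., cfc_id' ..]
  rw [hcfc, hP.1.cfc_eq]
  simp only [IsHermitian.cfc, det_map, det_diagonal, Function.comp_apply]
  exact_mod_cast Finset.one_le_prod fun i _ => le_add_of_nonneg_right (hP.eigenvalues_nonneg i)

lemma PosDef.det_le_det_of_le {M N : Matrix ι ι 𝕜} (hM : M.PosDef) (h : M ≤ N) :
    M.det ≤ N.det := by
  obtain ⟨L, hL⟩ := CStarAlgebra.nonneg_iff_eq_star_mul_self.mp (sub_nonneg.mpr h)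
  have hN : N = M + Lᴴ * L := by rw [← star_eq_conjTranspose, ← hL, add_sub_cancel]
  rw [hN, det_add_mul _ _ hM.det_pos.ne'.isUnit]
  exact le_mul_of_one_le_right hM.det_pos.le
    (hM.inv.posSemidef.mul_mul_conjTranspose_same L).one_le_det_one_add

lemma PosDef.inv_le_inv {M N : Matrix ι ι ℂ} (hM : M.PosDef) (h : M ≤ N) : N⁻¹ ≤ M⁻¹ := by
  simpa using CStarAlgebra.inv_le_inv (a := hM.isUnit.unit) (b := (hM.of_le h).isUnit.unit)
    hM.posSemidef.nonneg h

lemma PosDef.det_add_mul_det_le {M N C : Matrix ι ι ℂ} (hM : M.PosDef) (h : M ≤ N)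
    (hC : C.PosSemidef) : (N + C).det * M.det ≤ N.det * (M + C).det := by
  obtain ⟨L, rfl⟩ := CStarAlgebra.nonneg_iff_eq_star_mul_self.mp hC.nonneg
  have hN := hM.of_le h
  have hle : 1 + L * N⁻¹ * Lᴴ ≤ 1 + L * M⁻¹ * Lᴴ := by
    gcongr
    exact star_right_conjugate_le_conjugate (hM.inv_le_inv h) L
  have hdet := (PosDef.one.add_posSemidef
    (hN.inv.posSemidef.mul_mul_conjTranspose_same L)).det_le_det_of_le hle
  rw [star_eq_conjTranspose, det_add_mul _ _ hN.det_pos.ne'.isUnit,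
    det_add_mul _ _ hM.det_pos.ne'.isUnit, mul_right_comm, ← mul_assoc]
  exact mul_le_mul_of_nonneg_left hdet (mul_pos hN.det_pos hM.det_pos).le

end Matrix

section SumOfPosSemidef

variable {α ι : Type*}

lemma add_sum_le_add_sum_of_subset {𝕜 : Type*} [RCLike 𝕜] {D : α → Matrix ι ι 𝕜}
    {M : Matrix ι ι 𝕜} (hD : ∀ i, (D i).PosSemidef) {S T : Finset α}
    (h : S ⊆ T) : M + ∑ i ∈ S, D i ≤ M + ∑ i ∈ T, D i := by
  gcongr
  exact fun i _ _ => (hD i).nonneg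

lemma det_add_sum_union_mul_det_add_sum_inter_le [Fintype ι] [DecidableEq ι] [DecidableEq α]
    {D : α → Matrix ι ι ℂ} {M : Matrix ι ι ℂ} (hM : M.PosDef)
    (hD : ∀ i, (D i).PosSemidef) (S T : Finset α) :
    (M + ∑ i ∈ S ∪ T, D i).det * (M + ∑ i ∈ S ∩ T, D i).det ≤
      (M + ∑ i ∈ S, D i).det * (M + ∑ i ∈ T, D i).det := by
  have h := (hM.add_posSemidef (posSemidef_sum (S ∩ T) fun i _ => hD i)).det_add_mul_det_le
    (add_sum_le_add_sum_of_subset hD inter_subset_left)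
    (posSemidef_sum (T \ S) fun i _ => hD i)
  have hT : ∑ i ∈ S ∩ T, D i + ∑ i ∈ T \ S, D i = ∑ i ∈ T, D i := by
    rw [inter_comm]
    exact sum_inter_add_sum_sdiff T S D
  rwa [add_assoc, add_assoc, ← sum_union disjoint_sdiff, union_sdiff_self_eq_union, hT] at h

end SumOfPosSemidef

/-- for positive semidefinite Hermitian matrices `D₁, …, D_a`, the set
function `g(S) = log det(I + D(S))` is a rank function: normalized, increasing and
submodular.  Consequently `B(g, E)` is a polymatroid. -/
theorem stmt0 (a n : ℕ) (D : Fin a → Matrix (Fin n) (Fin n) ℂ)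
    (hD : ∀ i, (D i).PosSemidef) :
    gFun a n D ∅ = 0 ∧
    (∀ S T : Finset (Fin a), S ⊆ T → gFun a n D S ≤ gFun a n D T) ∧
    (∀ S T : Finset (Fin a),
      gFun a n D (S ∩ T) + gFun a n D (S ∪ T) ≤ gFun a n D S + gFun a n D T) := by
  have hPD (S : Finset (Fin a)) : (1 + ∑ i ∈ S, D i).PosDef :=
    PosDef.one.add_posSemidef (posSemidef_sum S fun i _ => hD i)
  have hre (S : Finset (Fin a)) : ((1 + ∑ i ∈ S, D i).det.re : ℂ) = (1 + ∑ i ∈ S, D i).det :=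
    (Complex.eq_re_of_ofReal_le (hPD S).det_pos.le).symm
  have hpos (S : Finset (Fin a)) : 0 < (1 + ∑ i ∈ S, D i).det.re :=
    Complex.real_lt_real.mp (by rw [hre]; exact (hPD S).det_pos)
  refine ⟨by simp [gFun], fun S T hST => ?_, fun S T => ?_⟩
  · refine Real.log_le_log (hpos S) (Complex.real_le_real.mp ?_)
    rw [hre, hre]
    exact (hPD S).det_le_det_of_le (add_sum_le_add_sum_of_subset hD hST)
  · have h := det_add_sum_union_mul_det_add_sum_inter_le PosDef.one hD S T
    rw [← hre (S ∪ T), ← hre (S ∩ T), ← hre S, ← hre T, ← Complex.ofReal_mul,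
      ← Complex.ofReal_mul, Complex.real_le_real] at h
    simp only [gFun]
    rw [← Real.log_mul (hpos _).ne' (hpos _).ne', ← Real.log_mul (hpos _).ne' (hpos _).ne',
      mul_comm]
    exact Real.log_le_log (mul_pos (hpos _) (hpos _)) h
end

section
/- Let Δ, B, C be n×n positive semi-definite Hermitian complex matrices, with B positive definite. Then det(Δ + B + C) · det(B) ≤ det(B + C) · det(Δ + B); equivalently, det(Δ+B+C)/det(Δ+B) ≤ det(B+C)/det(B). -/
/-!
Write `C = R⋆ R`. By the matrix determinant lemma, `det (X + C) = det X · det (1 + R X⁻¹ R⋆)`.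
Inversion is operator antitone, so `B ≤ Δ + B` gives `R (Δ + B)⁻¹ R⋆ ≤ R B⁻¹ R⋆`, and the
determinant is monotone on positive definite matrices (conjugate by `P ^ (-1/2)` to reduce to
`1 ≤ M`, where all eigenvalues are at least `1`). Hence `det (X + C) / det X` is antitone in
`X`, and comparing `X = Δ + B` with `X = B` gives the inequality.
-/

open ComplexOrder Matrix
open scoped MatrixOrder Matrix.Norms.L2Operator

namespace Matrix

variable {n : Type*} [Fintype n] [DecidableEq n]

theorem one_le_det_of_one_le {𝕜 : Type*} [RCLike 𝕜] {M : Matrix n n 𝕜} (hM : 1 ≤ M) :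
    1 ≤ M.det := by
  have hherm : M.IsHermitian := by
    simpa using (le_iff.mp hM).isHermitian.add isHermitian_one
  have heig : ∀ i, 1 ≤ hherm.eigenvalues i := fun i =>
    (algebraMap_le_iff_le_spectrum (r := (1 : ℝ)) (a := M) hherm.isSelfAdjoint).mp
      (by simpa using hM) _ (hherm.eigenvalues_mem_spectrum_real i)
  rw [hherm.det_eq_prod_eigenvalues, ← RCLike.ofReal_prod, ← RCLike.ofReal_one,
    RCLike.ofReal_le_ofReal]
  exact Finset.one_le_prod fun i _ => heig i

theorem PosDef.det_le_det_of_le_s1 {P Q : Matrix n n ℂ} (hP : P.PosDef) (hPQ : P ≤ Q) :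
    P.det ≤ Q.det := by
  have := hP.isStrictlyPositive
  set T := P ^ (-(1 / 2) : ℝ)
  have hTPT : T * P * T = 1 := CFC.conjugate_rpow_neg_one_half P
  have hTQT : 1 ≤ T * Q * T :=
    hTPT ▸ (IsSelfAdjoint.of_nonneg CFC.rpow_nonneg).conjugate_le_conjugate hPQ
  have hdet : Q.det = P.det * (T * Q * T).det := by
    have := congrArg det hTPT
    simp only [det_mul, det_one] at this ⊢
    linear_combination (-Q.det) * this
  calc P.det = P.det * 1 := (mul_one _).symm
    _ ≤ P.det * (T * Q * T).det :=
      mul_le_mul_of_nonneg_left (one_le_det_of_one_le hTQT) hP.det_pos.le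
    _ = Q.det := hdet.symm

theorem PosDef.inv_le_inv_of_le {X Y : Matrix n n ℂ} (hY : Y.PosDef) (hYX : Y ≤ X) :
    X⁻¹ ≤ Y⁻¹ := by
  lift Y to (Matrix n n ℂ)ˣ using hY.isUnit
  lift X to (Matrix n n ℂ)ˣ using CStarAlgebra.isUnit_of_le _ hYX hY.isStrictlyPositive
  simpa only [coe_units_inv] using CStarAlgebra.inv_le_inv hY.posSemidef.nonneg hYX

theorem det_add_mul_det_le_of_le {X Y C : Matrix n n ℂ} (hY : Y.PosDef) (hYX : Y ≤ X)
    (hC : C.PosSemidef) : (X + C).det * Y.det ≤ (Y + C).det * X.det := by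
  have hX : X.PosDef := by simpa using hY.add_posSemidef (le_iff.mp hYX)
  obtain ⟨R, rfl⟩ := CStarAlgebra.nonneg_iff_eq_star_mul_self.mp hC.nonneg
  have hle : 1 + R * X⁻¹ * star R ≤ 1 + R * Y⁻¹ * star R :=
    add_le_add_right (star_right_conjugate_le_conjugate (hY.inv_le_inv_of_le hYX) R) 1
  have hdet := (PosDef.one.add_posSemidef
    (hX.inv.posSemidef.mul_mul_conjTranspose_same R)).det_le_det_of_le_s1 hle
  rw [det_add_mul _ _ hX.det_pos.ne'.isUnit, det_add_mul _ _ hY.det_pos.ne'.isUnit]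
  calc X.det * (1 + R * X⁻¹ * star R).det * Y.det
      = X.det * Y.det * (1 + R * X⁻¹ * star R).det := by ring
    _ ≤ X.det * Y.det * (1 + R * Y⁻¹ * star R).det :=
      mul_le_mul_of_nonneg_left hdet (mul_nonneg hX.det_pos.le hY.det_pos.le)
    _ = Y.det * (1 + R * Y⁻¹ * star R).det * X.det := by ring

theorem PosSemidef.ofReal_re_det {M : Matrix n n ℂ} (hM : M.PosSemidef) :
    (M.det.re : ℂ) = M.det :=
  (Complex.eq_re_of_ofReal_le (r := 0) (by simpa using hM.det_nonneg)).symm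

end Matrix

/-- for `n × n` positive semidefinite Hermitian complex matrices `Δ, B, C`
with `B` positive definite,
`det(Δ + B + C) · det(B) ≤ det(B + C) · det(Δ + B)`
(all the determinants are nonnegative reals, so the inequality is stated for their
real parts). -/
theorem stmt1 (n : ℕ) (Δ B C : Matrix (Fin n) (Fin n) ℂ)
    (hΔ : Δ.PosSemidef) (hB : B.PosDef) (hC : C.PosSemidef) :
    (Δ + B + C).det.re * B.det.re ≤ (B + C).det.re * (Δ + B).det.re := by
  have h := det_add_mul_det_le_of_le hB (le_add_of_nonneg_left hΔ.nonneg) hC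
  rw [← ((hΔ.add hB.posSemidef).add hC).ofReal_re_det, ← hB.posSemidef.ofReal_re_det,
    ← (hB.posSemidef.add hC).ofReal_re_det, ← (hΔ.add hB.posSemidef).ofReal_re_det] at h
  exact_mod_cast h
end

section
/- Let f be a rank function on E = {1,...,a} and let π* be a permutation of E constructed by the greedy rule: for α = a, a−1, ..., 1, having already chosen π*(α+1),...,π*(a), the element π*(α) is chosen among the unchosen elements z to minimize f(E − {π*(α+1),...,π*(a)} − {z}); that is, for every α and every z ∈ E − {π*(α+1),...,π*(a)}, f({π*(1),...,π*(α−1)}) ≤ f({π*(1),...,π*(α−1), π*(α)} − {z}). Then the corner point v(π*) of the polymatroid B(f,E) maximizes the minimum coordinate over all corner points: for every permutation π of E, min_{1≤i≤a} v_{π*(i)}(π*) ≥ min_{1≤i≤a} v_{π(i)}(π). -/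
open Finset

/-- A rank function on the finite ground set: normalized, increasing and submodular. -/
def IsRankFunction {α : Type*} [DecidableEq α] (f : Finset α → ℝ) : Prop :=
  f ∅ = 0 ∧ (∀ S T : Finset α, S ⊆ T → f S ≤ f T) ∧
    (∀ S T : Finset α, f (S ∩ T) + f (S ∪ T) ≤ f S + f T)

/-- `{π(1), …, π(α)}`: the elements occupying the first positions of the
permutation `π`, up to and including position `α`. -/
def prefixUpTo {a : ℕ} (π : Equiv.Perm (Fin a)) (α : Fin a) : Finset (Fin a) :=
  (Finset.univ.filter fun k => k ≤ α).image π

/-- `{π(1), …, π(α−1)}`: the elements occupying the positions of `π` strictly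
before position `α`. -/
def prefixBelow {a : ℕ} (π : Equiv.Perm (Fin a)) (α : Fin a) : Finset (Fin a) :=
  (Finset.univ.filter fun k => k < α).image π

/-- The corner point `v(π)` of the polymatroid `B(f,E)` associated with the
permutation `π`, as a vector indexed by the ground set: its coordinate `π(i)` is
`f({π(1),…,π(i)}) − f({π(1),…,π(i−1)})`. -/
def cornerPoint {a : ℕ} (f : Finset (Fin a) → ℝ) (π : Equiv.Perm (Fin a))
    (i : Fin a) : ℝ :=
  f (prefixUpTo π (π.symm i)) - f (prefixBelow π (π.symm i))


lemma prefixBelow_eq {a : ℕ} (π : Equiv.Perm (Fin a)) (β : Fin a) :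
    prefixBelow π β = prefixUpTo π β \ {π β} := by
  ext x
  simp only [prefixBelow, prefixUpTo, Finset.mem_sdiff, Finset.mem_image,
    Finset.mem_filter, Finset.mem_univ, true_and, Finset.mem_singleton]
  constructor
  · rintro ⟨k, hk, rfl⟩
    exact ⟨⟨k, hk.le, rfl⟩, fun h => absurd (π.injective h) hk.ne⟩
  · rintro ⟨⟨k, hk, rfl⟩, hne⟩
    exact ⟨k, lt_of_le_of_ne hk (fun h => hne (by rw [h])), rfl⟩

/-- if the permutation `π*` is produced by the backward greedy rule
(for every position `α`, and every `z` among `{π*(1),…,π*(α)}`,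
`f({π*(1),…,π*(α−1)}) ≤ f({π*(1),…,π*(α)} − {z})`), then the corner point `v(π*)`
maximizes the minimum coordinate among all corner points of `B(f,E)`. -/
theorem stmt2 (a : ℕ) (ha : 0 < a) (f : Finset (Fin a) → ℝ)
    (hf : IsRankFunction f) (πs : Equiv.Perm (Fin a))
    (hgreedy : ∀ α : Fin a, ∀ z ∈ prefixUpTo πs α,
      f (prefixBelow πs α) ≤ f (prefixUpTo πs α \ {z})) :
    ∀ π : Equiv.Perm (Fin a),
      Finset.univ.inf' (Finset.univ_nonempty_iff.mpr ⟨⟨0, ha⟩⟩) (cornerPoint f π) ≤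
      Finset.univ.inf' (Finset.univ_nonempty_iff.mpr ⟨⟨0, ha⟩⟩) (cornerPoint f πs) := by
  intro π
  obtain ⟨is, _, his⟩ := Finset.exists_mem_eq_inf'
    (Finset.univ_nonempty_iff.mpr ⟨⟨0, ha⟩⟩) (cornerPoint f πs)
  set α := πs.symm is with hα
  set S := prefixUpTo πs α with hS
  have hiS : πs α ∈ S := by
    simp only [hS, prefixUpTo, Finset.mem_image, Finset.mem_filter, Finset.mem_univ, true_and]
    exact ⟨α, le_refl _, rfl⟩
  have hSne : (S.image π.symm).Nonempty := ⟨π.symm (πs α), Finset.mem_image_of_mem _ hiS⟩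
  set β := (S.image π.symm).max' hSne with hβ
  have hβmem : β ∈ S.image π.symm := Finset.max'_mem _ _
  obtain ⟨s, hsS, hsβ⟩ := Finset.mem_image.mp hβmem
  have hi : π β ∈ S := by rw [← hsβ]; simpa using hsS
  set Q := prefixUpTo π β with hQ
  have hSQ : S ⊆ Q := by
    intro x hx
    have hle : π.symm x ≤ β := Finset.le_max' _ _ (Finset.mem_image_of_mem _ hx)
    simp only [hQ, prefixUpTo, Finset.mem_image, Finset.mem_filter, Finset.mem_univ, true_and]
    exact ⟨π.symm x, hle, by simp⟩
  obtain ⟨hf0, hmono, hsub⟩ := hf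
  have hsubm := hsub (Q \ {π β}) S
  have h1 : (Q \ {π β}) ∩ S = S \ {π β} := by
    ext x
    simp only [Finset.mem_inter, Finset.mem_sdiff, Finset.mem_singleton]
    constructor
    · rintro ⟨⟨_, h⟩, hx⟩; exact ⟨hx, h⟩
    · rintro ⟨hx, h⟩; exact ⟨⟨hSQ hx, h⟩, hx⟩
  have h2 : (Q \ {π β}) ∪ S = Q := by
    apply Finset.Subset.antisymm
    · exact Finset.union_subset Finset.sdiff_subset hSQ
    · intro x hx
      by_cases hx' : x = π β
      · exact Finset.mem_union_right _ (hx' ▸ hi)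
      · exact Finset.mem_union_left _ (Finset.mem_sdiff.mpr ⟨hx, by simpa using hx'⟩)
  rw [h1, h2] at hsubm
  have hgr := hgreedy α (π β) hi
  have hc1 : cornerPoint f π (π β) = f Q - f (Q \ {π β}) := by
    simp [cornerPoint, prefixBelow_eq, hQ]
  have hc2 : cornerPoint f πs is = f S - f (prefixBelow πs α) := rfl
  calc Finset.univ.inf' (Finset.univ_nonempty_iff.mpr ⟨⟨0, ha⟩⟩) (cornerPoint f π)
      ≤ cornerPoint f π (π β) := Finset.inf'_le _ (Finset.mem_univ _)
    _ = f Q - f (Q \ {π β}) := hc1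
    _ ≤ f S - f (S \ {π β}) := by linarith
    _ ≤ f S - f (prefixBelow πs α) := by linarith
    _ = cornerPoint f πs is := hc2.symm
    _ = _ := his.symm
end

section
/- Let f be a rank function on E = {1,...,a}. Define recursively: T^(0) = ∅; for j ≥ 0, E^(j) = E − T^(j), f^(j)(S) = f(S ∪ T^(j)) − f(T^(j)) for S ⊆ E^(j); let S^(j) be a nonempty subset of E^(j) attaining m^(j) = min_{S ⊆ E^(j), S ≠ ∅} f^(j)(S)/|S|; and T^(j+1) = T^(j) ∪ S^(j). The recursion terminates at some step t with E^(t+1) = ∅, so S^(0),...,S^(t) partition E. Define x* ∈ ℝ^a by x*_i = m^(j) for i ∈ S^(j). Then x* belongs to the polymatroid B(f,E) (i.e., x*_i ≥ 0 and x*(S) ≤ f(S) for all S ⊆ E) and x* lies on the dominant face: x*(E) = f(E). -/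
open Finset

/-- `T⁽ʲ⁾ = S⁽⁰⁾ ∪ ⋯ ∪ S⁽ʲ⁻¹⁾`: the union of the blocks preceding block `j`. -/
def cumUnion {a t : ℕ} (S : Fin (t + 1) → Finset (Fin a)) (j : Fin (t + 1)) :
    Finset (Fin a) :=
  (Finset.univ.filter fun i => i < j).biUnion S

/-! With `T⁽ʲ⁺¹⁾ = S⁽ʲ⁾ ∪ T⁽ʲ⁾`,
the mass `|S⁽ʲ⁾| m⁽ʲ⁾` placed on block `j` is exactly the marginal value
`f(T⁽ʲ⁺¹⁾) - f(T⁽ʲ⁾)`, so `x*(E) = f(E)` telescopes.  For an arbitrary `U`, minimality of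
`m⁽ʲ⁾` bounds the mass on `U ∩ S⁽ʲ⁾` by the marginal value of `U ∩ S⁽ʲ⁾` over `T⁽ʲ⁾`, and
submodularity bounds this by the marginal value over the smaller set `U ∩ T⁽ʲ⁾`; these
telescope to `f(U)`. -/

section Submodular

variable {α : Type*} [DecidableEq α]

theorem marginal_le_marginal_of_submodular {f : Finset α → ℝ}
    (hsub : ∀ S T : Finset α, f (S ∩ T) + f (S ∪ T) ≤ f S + f T)
    {V T W : Finset α} (hVT : V ⊆ T) (hWT : Disjoint W T) :
    f (W ∪ T) - f T ≤ f (W ∪ V) - f V := by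
  have h := hsub (W ∪ V) T
  rw [union_inter_distrib_right, disjoint_iff_inter_eq_empty.1 hWT, empty_union,
    inter_eq_left.2 hVT, union_assoc, union_eq_right.2 hVT] at h
  linarith

theorem card_mul_marginal_div_card (f : Finset α → ℝ) (S T : Finset α) :
    S.card * ((f (S ∪ T) - f T) / S.card) = f (S ∪ T) - f T := by
  rcases S.eq_empty_or_nonempty with rfl | hS
  · simp
  · exact mul_div_cancel₀ _ (Nat.cast_ne_zero.2 hS.card_pos.ne')

theorem card_mul_le_marginal_of_le_marginal_div_card [Fintype α] {f : Finset α → ℝ}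
    {T : Finset α} {m : ℝ}
    (hmin : ∀ U : Finset α, U.Nonempty → U ⊆ Tᶜ → m ≤ (f (U ∪ T) - f T) / U.card)
    {W : Finset α} (hW : W ⊆ Tᶜ) :
    W.card * m ≤ f (W ∪ T) - f T := by
  rcases W.eq_empty_or_nonempty with rfl | hne
  · simp
  · rw [mul_comm, ← le_div_iff₀ (Nat.cast_pos.2 hne.card_pos)]
    exact hmin W hne hW

end Submodular

section PrefixUnion

variable {α : Type*} [DecidableEq α] {n : ℕ}

-- Indexed by `k : ℕ` rather than `Fin n`, so that the full union (`k = n`) is included.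
def prefixUnion (S : Fin n → Finset α) (k : ℕ) : Finset α :=
  (univ.filter fun i : Fin n => (i : ℕ) < k).biUnion S

@[simp]
theorem prefixUnion_zero (S : Fin n → Finset α) : prefixUnion S 0 = ∅ := by
  simp [prefixUnion]

theorem prefixUnion_succ (S : Fin n → Finset α) {k : ℕ} (hk : k < n) :
    prefixUnion S (k + 1) = S ⟨k, hk⟩ ∪ prefixUnion S k := by
  have h : (univ.filter fun i : Fin n => (i : ℕ) < k + 1)
      = insert ⟨k, hk⟩ (univ.filter fun i : Fin n => (i : ℕ) < k) := by
    ext i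
    simp [Fin.ext_iff, le_iff_eq_or_lt]
  rw [prefixUnion, h, biUnion_insert, prefixUnion]

theorem prefixUnion_self (S : Fin n → Finset α) : prefixUnion S n = univ.biUnion S := by
  rw [prefixUnion, filter_true_of_mem fun i _ => i.isLt]

theorem prefixUnion_inter (U : Finset α) (S : Fin n → Finset α) (k : ℕ) :
    prefixUnion (fun j => U ∩ S j) k = U ∩ prefixUnion S k := by
  simp only [prefixUnion, inter_biUnion]

theorem cumUnion_eq_prefixUnion {a t : ℕ} (S : Fin (t + 1) → Finset (Fin a))
    (j : Fin (t + 1)) : cumUnion S j = prefixUnion S j := by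
  simp only [cumUnion, prefixUnion, Fin.lt_def]

variable {S : Fin n → Finset α} {x : α → ℝ} {g : Finset α → ℝ}

theorem sum_prefixUnion_le (hS : ∀ j, Disjoint (S j) (prefixUnion S j))
    (hg : ∀ j, ∑ i ∈ S j, x i ≤ g (S j ∪ prefixUnion S j) - g (prefixUnion S j)) :
    ∑ i ∈ prefixUnion S n, x i ≤ g (prefixUnion S n) - g ∅ := by
  set d : ℕ → ℝ := fun k => ∑ i ∈ prefixUnion S k, x i - g (prefixUnion S k)
  have step : ∀ k ∈ range n, d (k + 1) - d k ≤ 0 := by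
    intro k hk
    have hk : k < n := mem_range.1 hk
    simp only [d, prefixUnion_succ S hk, sum_union (hS ⟨k, hk⟩)]
    linarith [hg ⟨k, hk⟩]
  have h := sum_nonpos step
  rw [sum_range_sub] at h
  simp only [d, prefixUnion_zero, sum_empty] at h
  linarith

theorem sum_prefixUnion_eq (hS : ∀ j, Disjoint (S j) (prefixUnion S j))
    (hg : ∀ j, ∑ i ∈ S j, x i = g (S j ∪ prefixUnion S j) - g (prefixUnion S j)) :
    ∑ i ∈ prefixUnion S n, x i = g (prefixUnion S n) - g ∅ := by
  have hle := sum_prefixUnion_le (x := x) (g := g) hS fun j => (hg j).le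
  have hge := sum_prefixUnion_le (x := fun i => -x i) (g := fun U => -g U) hS fun j => by
    rw [sum_neg_distrib]; linarith [hg j]
  rw [sum_neg_distrib] at hge
  linarith

end PrefixUnion

theorem stmt8_general (a t : ℕ) (f : Finset (Fin a) → ℝ) (hf : IsRankFunction f)
    (S : Fin (t + 1) → Finset (Fin a))
    (hcover : (Finset.univ : Finset (Fin (t + 1))).biUnion S = Finset.univ)
    (hSsub : ∀ j, S j ⊆ (cumUnion S j)ᶜ)
    (m : Fin (t + 1) → ℝ)
    (hm : ∀ j, m j = (f (S j ∪ cumUnion S j) - f (cumUnion S j)) / (S j).card)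
    (hmin : ∀ j, ∀ U : Finset (Fin a), U.Nonempty → U ⊆ (cumUnion S j)ᶜ →
      m j ≤ (f (U ∪ cumUnion S j) - f (cumUnion S j)) / U.card)
    (x : Fin a → ℝ) (hx : ∀ j, ∀ i ∈ S j, x i = m j) :
    (∀ i, 0 ≤ x i) ∧
    (∀ U : Finset (Fin a), ∑ i ∈ U, x i ≤ f U) ∧
    (∑ i, x i = f Finset.univ) := by
  obtain ⟨hf0, hfmono, hfsub⟩ := hf
  simp only [cumUnion_eq_prefixUnion] at hSsub hm hmin
  have hdisjP : ∀ j, Disjoint (S j) (prefixUnion S j) := fun j =>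
    subset_compl_iff_disjoint_right.1 (hSsub j)
  have hall : prefixUnion S (t + 1) = univ := (prefixUnion_self S).trans hcover
  have hblock : ∀ U j, ∑ i ∈ U ∩ S j, x i = (U ∩ S j).card * m j := fun U j => by
    rw [sum_congr rfl fun i hi => hx j i (mem_inter.1 hi).2, sum_const, nsmul_eq_mul]
  refine ⟨fun i => ?_, fun U => ?_, ?_⟩
  · obtain ⟨j, -, hj⟩ := mem_biUnion.1 (hcover ▸ mem_univ i)
    rw [hx j i hj, hm j]
    exact div_nonneg (sub_nonneg.2 (hfmono _ _ subset_union_right)) (Nat.cast_nonneg _)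
  · have h := sum_prefixUnion_le (S := fun j => U ∩ S j) (x := x) (g := f)
      (fun j => by
        rw [prefixUnion_inter]
        exact (hdisjP j).mono inter_subset_right inter_subset_right)
      (fun j => by
        simp only [prefixUnion_inter, hblock]
        calc ((U ∩ S j).card : ℝ) * m j
            ≤ f (U ∩ S j ∪ prefixUnion S j) - f (prefixUnion S j) :=
              card_mul_le_marginal_of_le_marginal_div_card (hmin j)
                (inter_subset_right.trans (hSsub j))
          _ ≤ _ := marginal_le_marginal_of_submodular hfsub inter_subset_right
              ((hdisjP j).mono_left inter_subset_right))
    rwa [prefixUnion_inter, hall, inter_univ, hf0, sub_zero] at h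
  · have h := sum_prefixUnion_eq (S := S) (x := x) (g := f) hdisjP fun j => by
      rw [← univ_inter (S j), hblock, univ_inter, hm j, card_mul_marginal_div_card]
    rwa [hall, hf0, sub_zero] at h

/-- the recursive max-min algorithm.  The blocks `S⁽⁰⁾, …, S⁽ᵗ⁾`
partition `E`; with `T⁽ʲ⁾ = S⁽⁰⁾ ∪ ⋯ ∪ S⁽ʲ⁻¹⁾`, `E⁽ʲ⁾ = E − T⁽ʲ⁾`,
`f⁽ʲ⁾(U) = f(U ∪ T⁽ʲ⁾) − f(T⁽ʲ⁾)`, the block `S⁽ʲ⁾` is a nonempty subset of `E⁽ʲ⁾`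
attaining `m⁽ʲ⁾ = min_{∅ ≠ U ⊆ E⁽ʲ⁾} f⁽ʲ⁾(U)/|U|`.  The vector `x*` with
`x*_i = m⁽ʲ⁾` for `i ∈ S⁽ʲ⁾` belongs to the polymatroid `B(f,E)` and lies on the
dominant face `x(E) = f(E)`. -/
theorem stmt8 (a t : ℕ) (f : Finset (Fin a) → ℝ) (hf : IsRankFunction f)
    (S : Fin (t + 1) → Finset (Fin a))
    (hSne : ∀ j, (S j).Nonempty)
    (hdisj : ∀ j k, j ≠ k → Disjoint (S j) (S k))
    (hcover : (Finset.univ : Finset (Fin (t + 1))).biUnion S = Finset.univ)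
    (hSsub : ∀ j, S j ⊆ (cumUnion S j)ᶜ)
    (m : Fin (t + 1) → ℝ)
    (hm : ∀ j, m j = (f (S j ∪ cumUnion S j) - f (cumUnion S j)) / (S j).card)
    (hmin : ∀ j, ∀ U : Finset (Fin a), U.Nonempty → U ⊆ (cumUnion S j)ᶜ →
      m j ≤ (f (U ∪ cumUnion S j) - f (cumUnion S j)) / U.card)
    (x : Fin a → ℝ) (hx : ∀ j, ∀ i ∈ S j, x i = m j) :
    (∀ i, 0 ≤ x i) ∧
    (∀ U : Finset (Fin a), ∑ i ∈ U, x i ≤ f U) ∧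
    (∑ i, x i = f Finset.univ) :=
  stmt8_general a t f hf S hcover hSsub m hm hmin x hx
end

section
/- Let f be a rank function on a finite set E, and let S_0 be a nonempty subset of E attaining m = min_{S ⊆ E, S ≠ ∅} f(S)/|S|. Define h(S) = f(S ∪ S_0) − f(S_0) for S ⊆ E − S_0. Then: (i) for every nonempty S ⊆ E − S_0, h(S)/|S| ≥ m; and (ii) if moreover S_0 is a maximal minimizer, i.e., f(S ∪ S_0)/(|S| + |S_0|) > m for every nonempty S ⊆ E − S_0, then h(S)/|S| > m for every nonempty S ⊆ E − S_0, so that min_{S ⊆ E − S_0, S ≠ ∅} h(S)/|S| > m whenever E − S_0 is nonempty. -/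
open Finset

/-! Removing from a set a part whose ratio is exactly `m` leaves the ratio of the rest on the
same side of `m` as the ratio of the whole. -/

section MarginalRatio

variable {m a b c d : ℝ}

theorem le_div_add_iff_le_sub_div (hc : 0 < c) (hd : 0 ≤ d) (hb : b = m * d) :
    m ≤ a / (c + d) ↔ m ≤ (a - b) / c := by
  rw [le_div_iff₀ (by linarith), le_div_iff₀ hc, hb]
  constructor <;> intro h <;> linarith

theorem lt_div_add_iff_lt_sub_div (hc : 0 < c) (hd : 0 ≤ d) (hb : b = m * d) :
    m < a / (c + d) ↔ m < (a - b) / c := by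
  rw [lt_div_iff₀ (by linarith), lt_div_iff₀ hc, hb]
  constructor <;> intro h <;> linarith

end MarginalRatio

theorem Finset.card_union_of_subset_compl {α : Type*} [DecidableEq α] [Fintype α]
    {S T : Finset α} (h : S ⊆ Tᶜ) : (S ∪ T).card = S.card + T.card :=
  card_union_of_disjoint (subset_compl_iff_disjoint_right.mp h)

theorem stmt10_general {α : Type*} [DecidableEq α] [Fintype α] (f : Finset α → ℝ)
    (S₀ : Finset α) (hS₀ : S₀.Nonempty) (m : ℝ)
    (hm : m = f S₀ / S₀.card)
    (hmin : ∀ S : Finset α, S.Nonempty → m ≤ f S / S.card) :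
    (∀ S : Finset α, S.Nonempty → S ⊆ S₀ᶜ →
      m ≤ (f (S ∪ S₀) - f S₀) / S.card) ∧
    ((∀ S : Finset α, S.Nonempty → S ⊆ S₀ᶜ →
        m < f (S ∪ S₀) / (S.card + S₀.card)) →
      ∀ S : Finset α, S.Nonempty → S ⊆ S₀ᶜ →
        m < (f (S ∪ S₀) - f S₀) / S.card) := by
  have hfS₀ : f S₀ = m * S₀.card := by
    rw [hm, div_mul_cancel₀]
    exact_mod_cast hS₀.card_pos.ne'
  refine ⟨fun S hS hSc => ?_, fun hmax S hS hSc => ?_⟩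
  · rw [← le_div_add_iff_le_sub_div (by exact_mod_cast hS.card_pos) (Nat.cast_nonneg _) hfS₀]
    have := hmin (S ∪ S₀) (hS.mono subset_union_left)
    rwa [card_union_of_subset_compl hSc, Nat.cast_add] at this
  · rw [← lt_div_add_iff_lt_sub_div (by exact_mod_cast hS.card_pos) (Nat.cast_nonneg _) hfS₀]
    exact hmax S hS hSc

/-- let `f` be a rank function on a finite set `E` and let `S₀ ≠ ∅`
attain `m = min_{∅ ≠ S ⊆ E} f(S)/|S|`.  With `h(S) = f(S ∪ S₀) − f(S₀)` on
`E − S₀`: (i) `h(S)/|S| ≥ m` for every nonempty `S ⊆ E − S₀`; and (ii) if `S₀` is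
a maximal minimizer (`f(S ∪ S₀)/(|S| + |S₀|) > m` for every nonempty
`S ⊆ E − S₀`), then `h(S)/|S| > m` for every nonempty `S ⊆ E − S₀`. -/
theorem stmt10 {α : Type*} [DecidableEq α] [Fintype α] (f : Finset α → ℝ)
    (hf : IsRankFunction f) (S₀ : Finset α) (hS₀ : S₀.Nonempty) (m : ℝ)
    (hm : m = f S₀ / S₀.card)
    (hmin : ∀ S : Finset α, S.Nonempty → m ≤ f S / S.card) :
    (∀ S : Finset α, S.Nonempty → S ⊆ S₀ᶜ →
      m ≤ (f (S ∪ S₀) - f S₀) / S.card) ∧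
    ((∀ S : Finset α, S.Nonempty → S ⊆ S₀ᶜ →
        m < f (S ∪ S₀) / (S.card + S₀.card)) →
      ∀ S : Finset α, S.Nonempty → S ⊆ S₀ᶜ →
        m < (f (S ∪ S₀) - f S₀) / S.card) :=
  stmt10_general f S₀ hS₀ m hm hmin
end

section
/- Let f be a rank function on E = {1,...,a} and let S^(0), S^(1), ..., S^(t) be a partition of E. Set T^(j) = S^(0) ∪ ... ∪ S^(j−1) (with T^(0) = ∅) and define the rank function f^(j)(S) = f(S ∪ T^(j)) − f(T^(j)) for S ⊆ S^(j). Let m^(0),...,m^(t) be real numbers and define x* ∈ ℝ^a by x*_i = m^(j) for i ∈ S^(j). Suppose for each j there exist nonnegative coefficients λ^(j)_γ indexed by the permutations π^(j)_γ of S^(j), with Σ_γ λ^(j)_γ = 1, such that the constant vector (m^(j),...,m^(j)) on S^(j) equals Σ_γ λ^(j)_γ u^(j)(π^(j)_γ), where u^(j)(π^(j)_γ) is the corner point of B(f^(j), S^(j)) for permutation π^(j)_γ. Then x* is the convex combination of corner points of B(f,E): x* = Σ_{γ_0} ... Σ_{γ_t} ( λ^(0)_{γ_0} · λ^(1)_{γ_1}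 · ... · λ^(t)_{γ_t} ) v(π(γ_0,...,γ_t)), where π(γ_0,...,γ_t) is the permutation of E listing S^(0) in order π^(0)_{γ_0} first, then S^(1) in order π^(1)_{γ_1}, ..., and finally S^(t) in order π^(t)_{γ_t}, and v(·) denotes the corner point of B(f,E). -/
open Finset

/-- A permutation of the block `S⁽ʲ⁾`, given as a bijective enumeration of its
elements. -/
abbrev BlockPerm {a t : ℕ} (S : Fin (t + 1) → Finset (Fin a)) (j : Fin (t + 1)) :=
  Fin (S j).card ≃ {y : Fin a // y ∈ S j}

/-- The corner point `u⁽ʲ⁾(π⁽ʲ⁾)` of the polymatroid `B(f⁽ʲ⁾, S⁽ʲ⁾)`, where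
`f⁽ʲ⁾(U) = f(U ∪ T⁽ʲ⁾) − f(T⁽ʲ⁾)`, for the permutation `σ` of `S⁽ʲ⁾`, evaluated
at the coordinate `i ∈ S⁽ʲ⁾`. -/
def blockCorner {a t : ℕ} (f : Finset (Fin a) → ℝ) (S : Fin (t + 1) → Finset (Fin a))
    (j : Fin (t + 1)) (σ : BlockPerm S j) (i : {y : Fin a // y ∈ S j}) : ℝ :=
  (f (((Finset.univ.filter fun k => k ≤ σ.symm i).image fun k => (σ k : Fin a)) ∪
        cumUnion S j) - f (cumUnion S j)) -
  (f (((Finset.univ.filter fun k => k < σ.symm i).image fun k => (σ k : Fin a)) ∪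
        cumUnion S j) - f (cumUnion S j))

/-!
At a coordinate `i ∈ S⁽ʲ⁾`, the corner point `v(π)` only sees the two `π`-prefixes ending at
`i`; for a concatenated permutation these are `T⁽ʲ⁾` together with the corresponding prefixes of
the block permutation, so `v(π(γ))ᵢ = u⁽ʲ⁾(π⁽ʲ⁾_{γⱼ})ᵢ` depends on `γⱼ` alone. Averaging with the
product weights `∏ₖ λ⁽ᵏ⁾_{γₖ}` then collapses to the average over `λ⁽ʲ⁾`, since every other
family of weights sums to one, and that average is `m⁽ʲ⁾ = x*ᵢ`.
-/

section Marginal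

variable {ι R : Type*} [Fintype ι] [DecidableEq ι] [CommSemiring R]
  {κ : ι → Type*} [∀ j, Fintype (κ j)]

theorem Fintype.sum_prod_mul_apply_eq_of_sum_eq_one (w : (j : ι) → κ j → R)
    (hw : ∀ j, ∑ σ, w j σ = 1) (j₀ : ι) (g : κ j₀ → R) :
    ∑ γ : (j : ι) → κ j, (∏ j, w j (γ j)) * g (γ j₀) = ∑ σ, w j₀ σ * g σ := by
  let F : (j : ι) → κ j → R := fun j σ => w j σ * if h : j = j₀ then g (h ▸ σ) else 1
  have hF : ∀ γ : (j : ι) → κ j, ∏ j, F j (γ j) = (∏ j, w j (γ j)) * g (γ j₀) := fun γ => by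
    rw [prod_mul_distrib, Fintype.prod_eq_single j₀ fun j hj => dif_neg hj, dif_pos rfl]
  calc ∑ γ : (j : ι) → κ j, (∏ j, w j (γ j)) * g (γ j₀)
      = ∏ j, ∑ σ, F j σ := by simp only [Fintype.prod_sum, hF]
    _ = ∑ σ, F j₀ σ := Fintype.prod_eq_single j₀ fun j hj => by simp [F, hj, hw]
    _ = ∑ σ, w j₀ σ * g σ := by simp [F]

end Marginal

section Prefixes

variable {a : ℕ} {π : Equiv.Perm (Fin a)} {p y : Fin a}

theorem mem_prefixUpTo : y ∈ prefixUpTo π p ↔ π.symm y ≤ p := by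
  simp [prefixUpTo, ← Equiv.eq_symm_apply]

theorem mem_prefixBelow : y ∈ prefixBelow π p ↔ π.symm y < p := by
  simp [prefixBelow, ← Equiv.eq_symm_apply]

theorem mem_cumUnion {t : ℕ} {S : Fin (t + 1) → Finset (Fin a)} {j : Fin (t + 1)} :
    y ∈ cumUnion S j ↔ ∃ j' < j, y ∈ S j' := by
  simp [cumUnion]

end Prefixes

section BlockPrefixes

variable {α : Type*} {s : Finset α} {n : ℕ} {σ : Fin n ≃ {y : α // y ∈ s}}
  {β : Type*} [LinearOrder β] {e : α → β} {i y : α}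

def blockPrefixUpTo [DecidableEq α] (σ : Fin n ≃ {y : α // y ∈ s}) (k : Fin n) : Finset α :=
  (univ.filter fun l => l ≤ k).image fun l => (σ l : α)

def blockPrefixBelow [DecidableEq α] (σ : Fin n ≃ {y : α // y ∈ s}) (k : Fin n) : Finset α :=
  (univ.filter fun l => l < k).image fun l => (σ l : α)

theorem strictMono_of_monotone_comp (hσ : Monotone fun k => e (σ k))
    (he : Function.Injective e) : StrictMono fun k => e (σ k) :=
  hσ.strictMono_of_injective fun _ _ h => σ.injective (Subtype.coe_injective (he h))

variable [DecidableEq α]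

theorem mem_blockPrefixUpTo_iff (hσ : Monotone fun k => e (σ k)) (he : Function.Injective e)
    (hi : i ∈ s) : y ∈ blockPrefixUpTo σ (σ.symm ⟨i, hi⟩) ↔ y ∈ s ∧ e y ≤ e i := by
  have hmono := strictMono_of_monotone_comp hσ he
  constructor
  · intro hy
    obtain ⟨l, hl, rfl⟩ := mem_image.mp hy
    exact ⟨(σ l).2, by simpa using hmono.monotone (mem_filter.mp hl).2⟩
  · rintro ⟨hy, hle⟩
    refine mem_image.mpr ⟨σ.symm ⟨y, hy⟩, mem_filter.mpr ⟨mem_univ _, ?_⟩, by simp⟩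
    exact hmono.le_iff_le.mp (by simpa using hle)

theorem mem_blockPrefixBelow_iff (hσ : Monotone fun k => e (σ k)) (he : Function.Injective e)
    (hi : i ∈ s) : y ∈ blockPrefixBelow σ (σ.symm ⟨i, hi⟩) ↔ y ∈ s ∧ e y < e i := by
  have hmono := strictMono_of_monotone_comp hσ he
  constructor
  · intro hy
    obtain ⟨l, hl, rfl⟩ := mem_image.mp hy
    exact ⟨(σ l).2, by simpa using hmono (mem_filter.mp hl).2⟩
  · rintro ⟨hy, hlt⟩
    refine mem_image.mpr ⟨σ.symm ⟨y, hy⟩, mem_filter.mpr ⟨mem_univ _, ?_⟩, by simp⟩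
    exact hmono.lt_iff_lt.mp (by simpa using hlt)

end BlockPrefixes

def IsBlockOrdered {a t : ℕ} (S : Fin (t + 1) → Finset (Fin a)) (π : Equiv.Perm (Fin a)) :
    Prop :=
  ∀ (p q : Fin a) (j j' : Fin (t + 1)), π p ∈ S j → π q ∈ S j' → p ≤ q → j ≤ j'

namespace IsBlockOrdered

variable {a t : ℕ} {S : Fin (t + 1) → Finset (Fin a)} {π : Equiv.Perm (Fin a)}
  {i y : Fin a} {j j' : Fin (t + 1)}

theorem le_of_symm_le (h : IsBlockOrdered S π) (hy : y ∈ S j') (hi : i ∈ S j)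
    (hle : π.symm y ≤ π.symm i) : j' ≤ j :=
  h _ _ _ _ (by simpa using hy) (by simpa using hi) hle

theorem symm_lt_of_mem_cumUnion (h : IsBlockOrdered S π) (hy : y ∈ cumUnion S j)
    (hi : i ∈ S j) : π.symm y < π.symm i := by
  obtain ⟨j', hj', hy⟩ := mem_cumUnion.mp hy
  exact lt_of_not_ge fun hle => hj'.not_ge (h.le_of_symm_le hi hy hle)

variable (hcover : (univ : Finset (Fin (t + 1))).biUnion S = univ) {σ : BlockPerm S j}
  (hσ : Monotone fun k => π.symm (σ k))
include hcover hσ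

theorem prefixUpTo_eq (h : IsBlockOrdered S π) (hi : i ∈ S j) :
    prefixUpTo π (π.symm i) = blockPrefixUpTo σ (σ.symm ⟨i, hi⟩) ∪ cumUnion S j := by
  ext y
  rw [mem_prefixUpTo, mem_union, mem_blockPrefixUpTo_iff hσ π.symm.injective hi]
  constructor
  · intro hle
    obtain ⟨j', -, hy⟩ := mem_biUnion.mp (hcover ▸ mem_univ y)
    rcases (h.le_of_symm_le hy hi hle).lt_or_eq with hlt | rfl
    · exact Or.inr (mem_cumUnion.mpr ⟨j', hlt, hy⟩)
    · exact Or.inl ⟨hy, hle⟩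
  · rintro (⟨-, hle⟩ | hT)
    · exact hle
    · exact (h.symm_lt_of_mem_cumUnion hT hi).le

theorem prefixBelow_eq (h : IsBlockOrdered S π) (hi : i ∈ S j) :
    prefixBelow π (π.symm i) = blockPrefixBelow σ (σ.symm ⟨i, hi⟩) ∪ cumUnion S j := by
  ext y
  rw [mem_prefixBelow, mem_union, mem_blockPrefixBelow_iff hσ π.symm.injective hi]
  constructor
  · intro hlt
    obtain ⟨j', -, hy⟩ := mem_biUnion.mp (hcover ▸ mem_univ y)
    rcases (h.le_of_symm_le hy hi hlt.le).lt_or_eq with hj' | rfl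
    · exact Or.inr (mem_cumUnion.mpr ⟨j', hj', hy⟩)
    · exact Or.inl ⟨hy, hlt⟩
  · rintro (⟨-, hlt⟩ | hT)
    · exact hlt
    · exact h.symm_lt_of_mem_cumUnion hT hi

theorem cornerPoint_eq_blockCorner (h : IsBlockOrdered S π) (f : Finset (Fin a) → ℝ)
    (hi : i ∈ S j) : cornerPoint f π i = blockCorner f S j σ ⟨i, hi⟩ := by
  rw [cornerPoint, h.prefixUpTo_eq hcover hσ hi, h.prefixBelow_eq hcover hσ hi, blockCorner,
    sub_sub_sub_cancel_right]
  rfl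

end IsBlockOrdered

theorem stmt12_general (a t : ℕ) (f : Finset (Fin a) → ℝ)
    (S : Fin (t + 1) → Finset (Fin a))
    (hcover : (Finset.univ : Finset (Fin (t + 1))).biUnion S = Finset.univ)
    (m : Fin (t + 1) → ℝ) (x : Fin a → ℝ) (hx : ∀ j, ∀ i ∈ S j, x i = m j)
    (lam : (j : Fin (t + 1)) → BlockPerm S j → ℝ)
    (hlam1 : ∀ j, ∑ σ : BlockPerm S j, lam j σ = 1)
    (hconv : ∀ j, ∀ i : {y : Fin a // y ∈ S j},
      m j = ∑ σ : BlockPerm S j, lam j σ * blockCorner f S j σ i)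
    (concat : ((j : Fin (t + 1)) → BlockPerm S j) → Equiv.Perm (Fin a))
    (hconcat_blocks : ∀ γ, ∀ (p q : Fin a) (j j' : Fin (t + 1)),
      concat γ p ∈ S j → concat γ q ∈ S j' → p ≤ q → j ≤ j')
    (hconcat_order : ∀ γ, ∀ j : Fin (t + 1), ∀ k k' : Fin (S j).card, k ≤ k' →
      (concat γ).symm (γ j k : Fin a) ≤ (concat γ).symm (γ j k' : Fin a)) :
    ∀ i : Fin a,
      x i = ∑ γ : (j : Fin (t + 1)) → BlockPerm S j,
        (∏ j, lam j (γ j)) * cornerPoint f (concat γ) i := by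
  intro i
  obtain ⟨j, -, hi⟩ := mem_biUnion.mp (hcover ▸ mem_univ i)
  have hcorner : ∀ γ : (j : Fin (t + 1)) → BlockPerm S j,
      cornerPoint f (concat γ) i = blockCorner f S j (γ j) ⟨i, hi⟩ := fun γ =>
    IsBlockOrdered.cornerPoint_eq_blockCorner hcover (hconcat_order γ j) (hconcat_blocks γ) f hi
  simp only [hx j i hi, hconv j ⟨i, hi⟩, hcorner]
  exact (Fintype.sum_prod_mul_apply_eq_of_sum_eq_one lam hlam1 j _).symm

/-- let `S⁽⁰⁾, …, S⁽ᵗ⁾` partition `E` and `x*_i = m⁽ʲ⁾` for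
`i ∈ S⁽ʲ⁾`.  Suppose for each `j` there are convex coefficients `λ⁽ʲ⁾` on the
permutations of `S⁽ʲ⁾` expressing the constant vector `m⁽ʲ⁾·1` as the convex
combination `∑_γ λ⁽ʲ⁾_γ u⁽ʲ⁾(π⁽ʲ⁾_γ)` of the corner points of `B(f⁽ʲ⁾, S⁽ʲ⁾)`.
Then `x*` is the convex combination of the corner points of `B(f,E)` given by the
concatenated permutations `π(γ₀,…,γ_t)` (listing `S⁽⁰⁾` in order `γ₀` first, …,
finally `S⁽ᵗ⁾` in order `γ_t`), with coefficients `∏_j λ⁽ʲ⁾_{γ_j}`. -/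
theorem stmt12 (a t : ℕ) (f : Finset (Fin a) → ℝ) (hf : IsRankFunction f)
    (S : Fin (t + 1) → Finset (Fin a))
    (hdisj : ∀ j k, j ≠ k → Disjoint (S j) (S k))
    (hcover : (Finset.univ : Finset (Fin (t + 1))).biUnion S = Finset.univ)
    (m : Fin (t + 1) → ℝ) (x : Fin a → ℝ) (hx : ∀ j, ∀ i ∈ S j, x i = m j)
    (lam : (j : Fin (t + 1)) → BlockPerm S j → ℝ)
    (hlam0 : ∀ j σ, 0 ≤ lam j σ)
    (hlam1 : ∀ j, ∑ σ : BlockPerm S j, lam j σ = 1)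
    (hconv : ∀ j, ∀ i : {y : Fin a // y ∈ S j},
      m j = ∑ σ : BlockPerm S j, lam j σ * blockCorner f S j σ i)
    (concat : ((j : Fin (t + 1)) → BlockPerm S j) → Equiv.Perm (Fin a))
    (hconcat_blocks : ∀ γ, ∀ (p q : Fin a) (j j' : Fin (t + 1)),
      concat γ p ∈ S j → concat γ q ∈ S j' → p ≤ q → j ≤ j')
    (hconcat_order : ∀ γ, ∀ j : Fin (t + 1), ∀ k k' : Fin (S j).card, k ≤ k' →
      (concat γ).symm (γ j k : Fin a) ≤ (concat γ).symm (γ j k' : Fin a)) :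
    ∀ i : Fin a,
      x i = ∑ γ : (j : Fin (t + 1)) → BlockPerm S j,
        (∏ j, lam j (γ j)) * cornerPoint f (concat γ) i :=
  stmt12_general a t f S hcover m x hx lam hlam1 hconv concat hconcat_blocks hconcat_order
end
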